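/- Completeness of weak forcing: for any structure A, tuple ā ∈ A, and infinitary formula ψ, either A ⊩* ψ(ā) or A ⊩* ¬ψ(ā) (and not both). -/

import Mathlib

/-! Conditions are structures ordered by elementary extension, and any two elementary extensions
`N₁`, `N₂` of `A` amalgamate over `A`: naming the elements of `A` by constants makes `N₁` and `N₂`
elementarily equivalent, and compactness applied to the union of their elementary diagrams yields
a common elementary extension. Hence if `A` does not weakly force `ψ(ā)`, some extension `N₁`
forces `¬ψ(ā)`; any other extension `N₂` has a common extension with `N₁`, which still forces
`¬ψ(ā)`, so `N₂` does not force `¬¬ψ(ā)`, i.e. `A ⊩ ¬¬¬ψ(ā)`. And `A ⊩ ¬¬ψ(ā)` together with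
`A ⊩ ¬¬¬ψ(ā)` is refuted by taking `A` itself as the extension. -/

open FirstOrder

universe u

namespace InfinitaryForcing

variable (L : FirstOrder.Language.{u, u})

/-- Infinitary formulas of `L_{∞,ω}`: set-indexed conjunctions and disjunctions,
finitary quantification, free variables among `Fin n`. -/
inductive InfForm : ℕ → Type (u + 1)
  | equal {n : ℕ} (t₁ t₂ : L.Term (Fin n)) : InfForm n
  | rel {n l : ℕ} (R : L.Relations l) (ts : Fin l → L.Term (Fin n)) : InfForm n
  | not {n : ℕ} (φ : InfForm n) : InfForm n
  | disj {n : ℕ} {ι : Type u} (Φ : ι → InfForm n) : InfForm n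
  | conj {n : ℕ} {ι : Type u} (Φ : ι → InfForm n) : InfForm n
  | ex {n : ℕ} (φ : InfForm (n + 1)) : InfForm n
  | all {n : ℕ} (φ : InfForm (n + 1)) : InfForm n

variable {L}

/-- Tarskian satisfaction for infinitary formulas. -/
def Realize : ∀ {n : ℕ}, InfForm L n → ∀ (M : Type u), L.Structure M → (Fin n → M) → Prop
  | _, .equal t₁ t₂, _M, S, v => letI := S; t₁.realize v = t₂.realize v
  | _, .rel R ts, _M, S, v => letI := S; Language.Structure.RelMap R fun i => (ts i).realize v
  | _, .not φ, M, S, v => ¬ Realize φ M S v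
  | _, .disj Φ, M, S, v => ∃ i, Realize (Φ i) M S v
  | _, .conj Φ, M, S, v => ∀ i, Realize (Φ i) M S v
  | _, .ex φ, M, S, v => ∃ b : M, Realize φ M S (Fin.snoc v b)
  | _, .all φ, M, S, v => ∀ b : M, Realize φ M S (Fin.snoc v b)

/-- Elementary embeddings, with the structures made explicit. -/
abbrev ElemEmb (M N : Type u) (SM : L.Structure M) (SN : L.Structure N) : Type u :=
  @FirstOrder.Language.ElementaryEmbedding L M N SM SN

/-- The strong forcing relation `A ⊩ ψ(ā)`, where conditions are structures
ordered by elementary extension. -/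
def Forces : ∀ {n : ℕ}, InfForm L n → ∀ (M : Type u), L.Structure M → (Fin n → M) → Prop
  | _, .equal t₁ t₂, _M, S, v => letI := S; t₁.realize v = t₂.realize v
  | _, .rel R ts, _M, S, v => letI := S; Language.Structure.RelMap R fun i => (ts i).realize v
  | _, .not φ, M, S, v =>
      ∀ (N : Type u) (SN : L.Structure N) (f : ElemEmb M N S SN),
        ¬ Forces φ N SN (fun i => f.toFun (v i))
  | _, .disj Φ, M, S, v => ∃ i, Forces (Φ i) M S v
  | _, .conj Φ, M, S, v =>
      ∀ (N : Type u) (SN : L.Structure N) (f : ElemEmb M N S SN) (i : _),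
        ∃ (P : Type u) (SP : L.Structure P) (g : ElemEmb N P SN SP),
          Forces (Φ i) P SP (fun k => g.toFun (f.toFun (v k)))
  | _, .ex φ, M, S, v => ∃ b : M, Forces φ M S (Fin.snoc v b)
  | _, .all φ, M, S, v =>
      ∀ (N : Type u) (SN : L.Structure N) (f : ElemEmb M N S SN) (b : N),
        ∃ (P : Type u) (SP : L.Structure P) (g : ElemEmb N P SN SP),
          Forces φ P SP (Fin.snoc (fun k => g.toFun (f.toFun (v k))) (g.toFun b))

/-- `M` decides `ψ(v)` if it strongly forces `ψ(v)` or `¬ψ(v)`. -/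
def Decides {n : ℕ} (ψ : InfForm L n) (M : Type u) (S : L.Structure M) (v : Fin n → M) : Prop :=
  Forces ψ M S v ∨ Forces ψ.not M S v

/-- The weak forcing relation `A ⊩* ψ := A ⊩ ¬¬ψ`. -/
def WForces {n : ℕ} (ψ : InfForm L n) (M : Type u) (S : L.Structure M) (v : Fin n → M) : Prop :=
  Forces ψ.not.not M S v

variable (L)

/-- Finitary (`L_{ω,ω}`) formulas among the infinitary ones. -/
inductive InfForm.IsFinitary : ∀ {n : ℕ}, InfForm L n → Prop
  | equal {n} (t₁ t₂ : L.Term (Fin n)) : IsFinitary (.equal t₁ t₂)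
  | rel {n l} (R : L.Relations l) (ts : Fin l → L.Term (Fin n)) : IsFinitary (.rel R ts)
  | not {n} {φ : InfForm L n} : IsFinitary φ → IsFinitary φ.not
  | disj {n} {ι : Type u} (_ : Finite ι) {Φ : ι → InfForm L n} :
      (∀ i, IsFinitary (Φ i)) → IsFinitary (.disj Φ)
  | conj {n} {ι : Type u} (_ : Finite ι) {Φ : ι → InfForm L n} :
      (∀ i, IsFinitary (Φ i)) → IsFinitary (.conj Φ)
  | ex {n} {φ : InfForm L (n + 1)} : IsFinitary φ → IsFinitary φ.ex
  | all {n} {φ : InfForm L (n + 1)} : IsFinitary φ → IsFinitary φ.all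

/-- Quantifier-free infinitary formulas. -/
inductive InfForm.IsQF : ∀ {n : ℕ}, InfForm L n → Prop
  | equal {n} (t₁ t₂ : L.Term (Fin n)) : IsQF (.equal t₁ t₂)
  | rel {n l} (R : L.Relations l) (ts : Fin l → L.Term (Fin n)) : IsQF (.rel R ts)
  | not {n} {φ : InfForm L n} : IsQF φ → IsQF φ.not
  | disj {n} {ι : Type u} {Φ : ι → InfForm L n} : (∀ i, IsQF (Φ i)) → IsQF (.disj Φ)
  | conj {n} {ι : Type u} {Φ : ι → InfForm L n} : (∀ i, IsQF (Φ i)) → IsQF (.conj Φ)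

/-- `L_{ω₁,ω}` formulas: all conjunctions and disjunctions are countable. -/
inductive InfForm.IsCtble : ∀ {n : ℕ}, InfForm L n → Prop
  | equal {n} (t₁ t₂ : L.Term (Fin n)) : IsCtble (.equal t₁ t₂)
  | rel {n l} (R : L.Relations l) (ts : Fin l → L.Term (Fin n)) : IsCtble (.rel R ts)
  | not {n} {φ : InfForm L n} : IsCtble φ → IsCtble φ.not
  | disj {n} {ι : Type u} (_ : Countable ι) {Φ : ι → InfForm L n} :
      (∀ i, IsCtble (Φ i)) → IsCtble (.disj Φ)
  | conj {n} {ι : Type u} (_ : Countable ι) {Φ : ι → InfForm L n} :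
      (∀ i, IsCtble (Φ i)) → IsCtble (.conj Φ)
  | ex {n} {φ : InfForm L (n + 1)} : IsCtble φ → IsCtble φ.ex
  | all {n} {φ : InfForm L (n + 1)} : IsCtble φ → IsCtble φ.all

/-- A fragment of `L_{∞,ω}`: a family of sets of formulas closed under negation
and subformulas. -/
structure IsFragment (𝔸 : ∀ n : ℕ, Set (InfForm L n)) : Prop where
  not_mem : ∀ {n} {φ : InfForm L n}, φ ∈ 𝔸 n → φ.not ∈ 𝔸 n
  of_not : ∀ {n} {φ : InfForm L n}, φ.not ∈ 𝔸 n → φ ∈ 𝔸 n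
  of_disj : ∀ {n} {ι : Type u} {Φ : ι → InfForm L n}, InfForm.disj Φ ∈ 𝔸 n → ∀ i, Φ i ∈ 𝔸 n
  of_conj : ∀ {n} {ι : Type u} {Φ : ι → InfForm L n}, InfForm.conj Φ ∈ 𝔸 n → ∀ i, Φ i ∈ 𝔸 n
  of_ex : ∀ {n} {φ : InfForm L (n + 1)}, φ.ex ∈ 𝔸 n → φ ∈ 𝔸 (n + 1)
  of_all : ∀ {n} {φ : InfForm L (n + 1)}, φ.all ∈ 𝔸 n → φ ∈ 𝔸 (n + 1)

variable {L}

/-- `G` is `𝔸`-generic if it decides every instance of every formula of `𝔸`. -/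
def IsGeneric (𝔸 : ∀ n : ℕ, Set (InfForm L n)) (G : Type u) (SG : L.Structure G) : Prop :=
  ∀ (n : ℕ) (ψ : InfForm L n), ψ ∈ 𝔸 n → ∀ v : Fin n → G, Decides ψ G SG v

variable (L)

mutual
  /-- Finitary `∃ₙ` formulas: `n` alternating blocks of quantifiers beginning
  with existentials, counting finite conjunctions/disjunctions as free. -/
  inductive IsEx : ℕ → ∀ {k : ℕ}, InfForm L k → Prop
    | equal {m k} (t₁ t₂ : L.Term (Fin k)) : IsEx m (.equal t₁ t₂)
    | rel {m k l} (R : L.Relations l) (ts : Fin l → L.Term (Fin k)) : IsEx m (.rel R ts)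
    | not {m k} {φ : InfForm L k} : IsAll m φ → IsEx m φ.not
    | disj {m k} {ι : Type u} (_ : Finite ι) {Φ : ι → InfForm L k} :
        (∀ i, IsEx m (Φ i)) → IsEx m (.disj Φ)
    | conj {m k} {ι : Type u} (_ : Finite ι) {Φ : ι → InfForm L k} :
        (∀ i, IsEx m (Φ i)) → IsEx m (.conj Φ)
    | ex {m k} {φ : InfForm L (k + 1)} : IsEx m φ → 1 ≤ m → IsEx m φ.ex
    | exStep {m k} {φ : InfForm L (k + 1)} : IsAll m φ → IsEx (m + 1) φ.ex

  /-- Finitary `∀ₙ` formulas. -/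
  inductive IsAll : ℕ → ∀ {k : ℕ}, InfForm L k → Prop
    | equal {m k} (t₁ t₂ : L.Term (Fin k)) : IsAll m (.equal t₁ t₂)
    | rel {m k l} (R : L.Relations l) (ts : Fin l → L.Term (Fin k)) : IsAll m (.rel R ts)
    | not {m k} {φ : InfForm L k} : IsEx m φ → IsAll m φ.not
    | disj {m k} {ι : Type u} (_ : Finite ι) {Φ : ι → InfForm L k} :
        (∀ i, IsAll m (Φ i)) → IsAll m (.disj Φ)
    | conj {m k} {ι : Type u} (_ : Finite ι) {Φ : ι → InfForm L k} :
        (∀ i, IsAll m (Φ i)) → IsAll m (.conj Φ)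
    | all {m k} {φ : InfForm L (k + 1)} : IsAll m φ → 1 ≤ m → IsAll m φ.all
    | allStep {m k} {φ : InfForm L (k + 1)} : IsEx m φ → IsAll (m + 1) φ.all
end

/-- `f : A → B` is an `n`-elementary map (`A ⪯ₙ B` when `f` is an inclusion):
every finitary `∃ₙ` or `∀ₙ` formula transfers along `f`. -/
def IsNElemMap (n : ℕ) {A B : Type u} (SA : L.Structure A) (SB : L.Structure B)
    (f : A → B) : Prop :=
  ∀ (k : ℕ) (φ : InfForm L k), (IsEx L n φ ∨ IsAll L n φ) →
    ∀ v : Fin k → A, Realize φ A SA v ↔ Realize φ B SB (fun i => f (v i))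

/-- `f : A → B` is an elementary map: every finitary formula transfers along `f`. -/
def IsElemMap {A B : Type u} (SA : L.Structure A) (SB : L.Structure B)
    (f : A → B) : Prop :=
  ∀ (k : ℕ) (φ : InfForm L k), InfForm.IsFinitary L φ →
    ∀ v : Fin k → A, Realize φ A SA v ↔ Realize φ B SB (fun i => f (v i))

end InfinitaryForcing

universe v

namespace FirstOrder.Language

variable {L : Language.{u, v}}

noncomputable def ElementaryEmbedding.ofIsEmpty {M N : Type*} [L.Structure M] [L.Structure N]
    [IsEmpty M] (h : M ≅[L] N) : M ↪ₑ[L] N where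
  toFun := isEmptyElim
  map_formula' := by
    intro n φ x
    cases n with
    | zero =>
      have hM : φ.Realize x ↔ M ⊨ φ.relabel (isEmptyElim : Fin 0 → Empty) := by
        rw [Sentence.Realize, Formula.realize_relabel, Subsingleton.elim x]
      have hN : φ.Realize (isEmptyElim ∘ x : Fin 0 → N) ↔
          N ⊨ φ.relabel (isEmptyElim : Fin 0 → Empty) := by
        rw [Sentence.Realize, Formula.realize_relabel, Subsingleton.elim (isEmptyElim ∘ x)]
      exact hN.trans ((h.realize_sentence _).symm.trans hM.symm)
    | succ n => exact isEmptyElim (x 0)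

theorem ElementarilyEquivalent.exists_constantsOn_realize {M₁ M₂ : Type*} [L.Structure M₁]
    [L.Structure M₂] [Nonempty M₂] (h : M₁ ≅[L] M₂) {σ : L[[M₁]].Sentence} (hσ : M₁ ⊨ σ) :
    ∃ c : M₁ → M₂, letI := constantsOn.structure c; M₂ ⊨ σ := by
  classical
  have := h.symm.nonempty
  have hM₁ : M₁ ⊨ (Formula.equivSentence.symm σ).exClosure :=
    Formula.exists_realize_equivSentence_iff_realize_exClosure.1 ⟨id, by simpa using hσ⟩
  simpa using
    Formula.exists_realize_equivSentence_iff_realize_exClosure.2 ((h.realize_sentence _).1 hM₁)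

theorem nonempty_elementaryEmbedding_of_model_onTheory {M γ Q : Type*} [L.Structure M]
    (e : M → γ) [L[[γ]].Structure Q] [L.Structure Q] [(L.lhomWithConstants γ).IsExpansionOn Q]
    (hQ : Q ⊨ (L.lhomWithConstantsMap e).onTheory (L.elementaryDiagram M)) :
    Nonempty (M ↪ₑ[L] Q) := by
  let : L[[M]].Structure Q := (L.lhomWithConstantsMap e).reduct Q
  have : (L.lhomWithConstants M).IsExpansionOn Q :=
    ⟨(L.lhomWithConstants γ).map_onFunction, (L.lhomWithConstants γ).map_onRelation⟩
  have : Q ⊨ L.elementaryDiagram M := (LHom.onTheory_model _ _).1 hQ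
  exact ⟨ElementaryEmbedding.ofModelsElementaryDiagram L M Q⟩

theorem ElementarilyEquivalent.isSatisfiable_of_finite_subset_elementaryDiagram {M₁ M₂ : Type*}
    [L.Structure M₁] [L.Structure M₂] [Nonempty M₂] (h : M₁ ≅[L] M₂) {t : L[[M₁]].Theory}
    (ht : t ⊆ L.elementaryDiagram M₁) (htfin : t.Finite) :
    ((L.lhomWithConstantsMap (Sum.inl : M₁ → M₁ ⊕ M₂)).onTheory t ∪
      (L.lhomWithConstantsMap (Sum.inr : M₂ → M₁ ⊕ M₂)).onTheory
        (L.elementaryDiagram M₂)).IsSatisfiable := by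
  have := htfin.to_subtype
  have hM₁ : M₁ ⊨ BoundedFormula.iInf (fun τ : t => (τ : L[[M₁]].Sentence)) :=
    BoundedFormula.realize_iInf.2 fun τ => ht τ.2
  obtain ⟨c, hc⟩ := h.exists_constantsOn_realize hM₁
  let := constantsOn.structure c
  let : (constantsOn (M₁ ⊕ M₂)).Structure M₂ := constantsOn.structure (Sum.elim c id)
  have : (L.lhomWithConstantsMap (Sum.inl : M₁ → M₁ ⊕ M₂)).IsExpansionOn M₂ :=
    have := constantsOnMap_isExpansionOn (fβ := Sum.elim c id) (f := Sum.inl) (fα := c) rfl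
    LHom.sumMap_isExpansionOn _ _ _
  have : (L.lhomWithConstantsMap (Sum.inr : M₂ → M₁ ⊕ M₂)).IsExpansionOn M₂ :=
    have := constantsOnMap_isExpansionOn (fβ := Sum.elim c id) (f := Sum.inr) (fα := id) rfl
    LHom.sumMap_isExpansionOn _ _ _
  have : M₂ ⊨ t := ⟨fun τ hτ => BoundedFormula.realize_iInf.1 hc ⟨τ, hτ⟩⟩
  have : M₂ ⊨ (L.lhomWithConstantsMap Sum.inl).onTheory t ∪
      (L.lhomWithConstantsMap Sum.inr).onTheory (L.elementaryDiagram M₂) :=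
    ((LHom.onTheory_model _ _).2 this).union ((LHom.onTheory_model _ _).2 inferInstance)
  exact Theory.Model.isSatisfiable M₂

theorem ElementarilyEquivalent.isSatisfiable_elementaryDiagram_union {M₁ M₂ : Type*}
    [L.Structure M₁] [L.Structure M₂] [Nonempty M₂] (h : M₁ ≅[L] M₂) :
    ((L.lhomWithConstantsMap (Sum.inl : M₁ → M₁ ⊕ M₂)).onTheory (L.elementaryDiagram M₁) ∪
      (L.lhomWithConstantsMap (Sum.inr : M₂ → M₁ ⊕ M₂)).onTheory
        (L.elementaryDiagram M₂)).IsSatisfiable := by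
  rw [Theory.isSatisfiable_iff_isFinitelySatisfiable]
  intro T₀ hT₀
  obtain ⟨t, ht, htfin, hT₀t⟩ := Set.exists_subset_image_finite_and.1
    ⟨(T₀ : L[[M₁ ⊕ M₂]].Theory) ∩
        (L.lhomWithConstantsMap Sum.inl).onTheory (L.elementaryDiagram M₁),
      Set.inter_subset_right, T₀.finite_toSet.inter_of_left _, rfl⟩
  refine (h.isSatisfiable_of_finite_subset_elementaryDiagram ht htfin).mono fun σ hσ => ?_
  rcases hT₀ hσ with hσ₁ | hσ₂
  · exact Or.inl (hT₀t.subset ⟨hσ, hσ₁⟩)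
  · exact Or.inr hσ₂

theorem ElementarilyEquivalent.exists_elementaryEmbedding_pair {M₁ M₂ : Type (max u v)}
    [L.Structure M₁] [L.Structure M₂] (h : M₁ ≅[L] M₂) :
    ∃ (Q : Type (max u v)) (_ : L.Structure Q),
      Nonempty (M₁ ↪ₑ[L] Q) ∧ Nonempty (M₂ ↪ₑ[L] Q) := by
  rcases isEmpty_or_nonempty M₁ with _ | _
  · exact ⟨M₂, inferInstance, ⟨.ofIsEmpty h⟩, ⟨.refl L M₂⟩⟩
  have := h.nonempty
  obtain ⟨Q⟩ := h.isSatisfiable_elementaryDiagram_union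
  let := (L.lhomWithConstants (M₁ ⊕ M₂)).reduct Q
  exact ⟨Q, _,
    nonempty_elementaryEmbedding_of_model_onTheory Sum.inl (Q.is_model.mono Set.subset_union_left),
    nonempty_elementaryEmbedding_of_model_onTheory Sum.inr (Q.is_model.mono Set.subset_union_right)⟩

def ElementaryEmbedding.liftWithConstantsSelf {M N : Type*} [L.Structure M] [L.Structure N]
    (f : M ↪ₑ[L] N) [(constantsOn M).Structure N]
    (hcon : ∀ a : M, ((L.con a : L[[M]].Constants) : N) = f a) :
    M ↪ₑ[L[[M]]] N where
  toFun := f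
  map_formula' n φ x := by
    have hval : Sum.elim (fun a => ((L.con a : L[[M]].Constants) : N)) (f ∘ x) =
        f ∘ Sum.elim (fun a => ((L.con a : L[[M]].Constants) : M)) x := by
      funext i
      cases i
      exacts [hcon _, rfl]
    simpa only [Formula.Realize, ← BoundedFormula.realize_constantsVarsEquiv, hval] using
      f.map_formula (BoundedFormula.constantsVarsEquiv φ)
        (Sum.elim (fun a => ((L.con a : L[[M]].Constants) : M)) x)

def ElementaryEmbedding.reduct {L' : Language} (φ : L →ᴸ L') {M N : Type*} [L.Structure M]
    [L.Structure N] [L'.Structure M] [L'.Structure N] [φ.IsExpansionOn M] [φ.IsExpansionOn N]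
    (e : M ↪ₑ[L'] N) : M ↪ₑ[L] N where
  toFun := e
  map_formula' n ψ x := by
    rw [← φ.realize_onFormula ψ, ← φ.realize_onFormula ψ]
    exact e.map_formula (φ.onFormula ψ) x

theorem ElementaryEmbedding.exists_amalgamation {A N₁ N₂ : Type (max u v)} [L.Structure A]
    [L.Structure N₁] [L.Structure N₂] (f₁ : A ↪ₑ[L] N₁) (f₂ : A ↪ₑ[L] N₂) :
    ∃ (Q : Type (max u v)) (_ : L.Structure Q) (g₁ : N₁ ↪ₑ[L] Q) (g₂ : N₂ ↪ₑ[L] Q),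
      ∀ a, g₁ (f₁ a) = g₂ (f₂ a) := by
  let : (constantsOn A).Structure N₁ := constantsOn.structure f₁
  let : (constantsOn A).Structure N₂ := constantsOn.structure f₂
  have hequiv : N₁ ≅[L[[A]]] N₂ :=
    (f₁.liftWithConstantsSelf fun _ => rfl).elementarilyEquivalent.symm.trans
      (f₂.liftWithConstantsSelf fun _ => rfl).elementarilyEquivalent
  obtain ⟨Q, _, ⟨g₁⟩, ⟨g₂⟩⟩ := hequiv.exists_elementaryEmbedding_pair
  let := (L.lhomWithConstants A).reduct Q
  exact ⟨Q, _, g₁.reduct (L.lhomWithConstants A), g₂.reduct (L.lhomWithConstants A),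
    fun a => (g₁.map_constants (L.con a)).trans (g₂.map_constants (L.con a)).symm⟩

end FirstOrder.Language

namespace InfinitaryForcing

open FirstOrder.Language

variable {L : FirstOrder.Language.{u, u}} {n : ℕ} {φ : InfForm L n}

theorem Forces.not_mono {M N : Type u} {SM : L.Structure M} {SN : L.Structure N} {v : Fin n → M}
    (h : Forces φ.not M SM v) (f : ElemEmb M N SM SN) : Forces φ.not N SN (fun i => f (v i)) :=
  fun P SP g => h P SP (g.comp f)

theorem not_forces_not_not_of_forces_not {A N₁ N₂ : Type u} {SA : L.Structure A}
    {SN₁ : L.Structure N₁} {SN₂ : L.Structure N₂} (f₁ : ElemEmb A N₁ SA SN₁)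
    (f₂ : ElemEmb A N₂ SA SN₂) {v : Fin n → A} (h₁ : Forces φ.not N₁ SN₁ (fun i => f₁ (v i))) :
    ¬ Forces φ.not.not N₂ SN₂ (fun i => f₂ (v i)) := by
  intro h₂
  obtain ⟨Q, SQ, g₁, g₂, hg⟩ := ElementaryEmbedding.exists_amalgamation f₁ f₂
  have hQ : Forces φ.not Q SQ (fun i => g₂ (f₂ (v i))) := by
    simpa only [hg] using h₁.not_mono g₁
  exact h₂ Q SQ g₂ hQ

theorem wForces_not_of_forces_not {A N : Type u} {SA : L.Structure A} {SN : L.Structure N}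
    (f : ElemEmb A N SA SN) {v : Fin n → A} (h : Forces φ.not N SN (fun i => f (v i))) :
    WForces φ.not A SA v :=
  fun _ _ g => not_forces_not_not_of_forces_not f g h

/-- Completeness of weak forcing: every structure weakly forces `ψ(ā)` or `¬ψ(ā)`,
and never both. -/
theorem stmt12 {L : FirstOrder.Language.{u, u}} {n : ℕ} (ψ : InfForm L n)
    (A : Type u) (SA : L.Structure A) (v : Fin n → A) :
    (WForces ψ A SA v ∨ WForces ψ.not A SA v) ∧
      ¬ (WForces ψ A SA v ∧ WForces ψ.not A SA v) := by
  refine ⟨?_, fun ⟨hψ, hnψ⟩ => hnψ A SA (ElementaryEmbedding.refl L A) hψ⟩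
  by_cases hψ : WForces ψ A SA v
  · exact .inl hψ
  obtain ⟨N, SN, f, hf⟩ : ∃ (N : Type u) (SN : L.Structure N) (f : ElemEmb A N SA SN),
      Forces ψ.not N SN (fun i => f (v i)) := by
    by_contra! h
    exact hψ h
  exact .inr (wForces_not_of_forces_not f hf)

end InfinitaryForcing
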